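/- Let n_x, n_y be coprime positive integers and φ_x, φ_y real numbers such that n_y·φ_x − n_x·φ_y is not an integer multiple of π. Suppose t₁, t₂ ∈ [0, 2π) with t₁ ≠ t₂ satisfy cos(n_x t₁ + φ_x) = cos(n_x t₂ + φ_x) and cos(n_y t₁ + φ_y) = cos(n_y t₂ + φ_y). Then, possibly after interchanging t₁ and t₂, there exist integers k and j such that either (Type I) 1 ≤ k ≤ n_x − 1 and t₁ ≡ (−k/n_x + j/n_y)π − φ_y/n_y (mod 2π) and t₂ ≡ (k/n_x + j/n_y)π − φ_y/n_y (mod 2π), or (Type II) 1 ≤ k ≤ n_y − 1 and t₁ ≡ (−k/n_y + j/n_x)π − φ_x/n_x (mod 2π) and t₂ ≡ (k/n_y + j/n_x)π − φ_x/n_x (mod 2π). -/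
import Mathlib


open Real

/-- Mixed case: frequency `nx` gives a "difference" relation and frequency `ny` a
"sum" relation; this produces a Type I double point (relative to these names). -/
lemma lissajous_aux (nx ny : ℕ) (hnx : 0 < nx) (hny : 0 < ny) (φy t₁ t₂ : ℝ)
    (hb : |t₂ - t₁| < 2 * π) (hne : t₁ ≠ t₂)
    (m j : ℤ) (hm : (nx : ℝ) * (t₂ - t₁) = 2 * m * π)
    (hj : (ny : ℝ) * (t₁ + t₂) + 2 * φy = 2 * j * π) :
    ∃ s₁ s₂ : ℝ, ((s₁ = t₁ ∧ s₂ = t₂) ∨ (s₁ = t₂ ∧ s₂ = t₁)) ∧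
      ∃ k : ℤ, 1 ≤ k ∧ k ≤ (nx : ℤ) - 1 ∧
        (∃ l : ℤ, s₁ - ((-(k / (nx : ℝ)) + (j : ℝ) / (ny : ℝ)) * π - φy / (ny : ℝ)) = l * (2 * π)) ∧
        (∃ l : ℤ, s₂ - (((k : ℝ) / (nx : ℝ) + (j : ℝ) / (ny : ℝ)) * π - φy / (ny : ℝ)) = l * (2 * π)) := by
  have hπ : (0 : ℝ) < π := Real.pi_pos
  have hx : (nx : ℝ) ≠ 0 := by positivity
  have hy : (ny : ℝ) ≠ 0 := by positivity
  have e1 : t₂ - t₁ = 2 * (m : ℝ) * π / (nx : ℝ) := by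
    rw [eq_div_iff hx]; linear_combination hm
  have e2 : t₁ + t₂ = (2 * (j : ℝ) * π - 2 * φy) / (ny : ℝ) := by
    rw [eq_div_iff hy]; linear_combination hj
  have hm0 : m ≠ 0 := by
    rintro rfl
    apply hne
    push_cast at e1
    have : t₂ - t₁ = 0 := by rw [e1]; ring
    linarith
  have hmlt : |(m : ℝ)| < nx := by
    have h1 : |(nx : ℝ) * (t₂ - t₁)| = 2 * |(m : ℝ)| * π := by
      rw [hm, abs_mul, abs_mul, abs_two, abs_of_nonneg hπ.le]
    have h2 : |(nx : ℝ) * (t₂ - t₁)| < (nx : ℝ) * (2 * π) := by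
      rw [abs_mul, abs_of_nonneg (by positivity : (0:ℝ) ≤ (nx:ℝ))]
      exact mul_lt_mul_of_pos_left hb (by positivity)
    nlinarith
  have hmlt' : m < (nx : ℤ) ∧ -(nx : ℤ) < m := by
    constructor
    · exact_mod_cast lt_of_le_of_lt (le_abs_self (m:ℝ)) hmlt
    · have := lt_of_le_of_lt (neg_le_abs (m:ℝ)) hmlt
      exact_mod_cast (by linarith : -(nx:ℝ) < (m:ℝ))
  rcases lt_or_gt_of_ne hm0 with hneg | hpos
  · -- m < 0 : swap, k = -m
    refine ⟨t₂, t₁, Or.inr ⟨rfl, rfl⟩, -m, by omega, by omega, ⟨0, ?_⟩, ⟨0, ?_⟩⟩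
    · push_cast
      linear_combination e2 / 2 + e1 / 2
    · push_cast
      linear_combination e2 / 2 - e1 / 2
  · -- m > 0 : k = m
    refine ⟨t₁, t₂, Or.inl ⟨rfl, rfl⟩, m, by omega, by omega, ⟨0, ?_⟩, ⟨0, ?_⟩⟩
    · push_cast
      linear_combination e2 / 2 - e1 / 2
    · push_cast
      linear_combination e2 / 2 + e1 / 2

/-- Every double point of the `xy`-projection of a nondegenerate Lissajous curve is
of Type I or of Type II, with parameter values of the stated form modulo `2π`. -/
theorem lissajous_double_points_two_types
    (nx ny : ℕ) (hnx : 0 < nx) (hny : 0 < ny) (hcop : Nat.Coprime nx ny)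
    (φx φy : ℝ) (hphase : ¬ ∃ l : ℤ, (ny : ℝ) * φx - (nx : ℝ) * φy = l * π)
    (t₁ t₂ : ℝ) (h₁ : t₁ ∈ Set.Ico (0 : ℝ) (2 * π)) (h₂ : t₂ ∈ Set.Ico (0 : ℝ) (2 * π))
    (hne : t₁ ≠ t₂)
    (hcx : Real.cos (nx * t₁ + φx) = Real.cos (nx * t₂ + φx))
    (hcy : Real.cos (ny * t₁ + φy) = Real.cos (ny * t₂ + φy)) :
    ∃ s₁ s₂ : ℝ, ((s₁ = t₁ ∧ s₂ = t₂) ∨ (s₁ = t₂ ∧ s₂ = t₁)) ∧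
      ((∃ k j : ℤ, 1 ≤ k ∧ k ≤ (nx : ℤ) - 1 ∧
          (∃ l : ℤ, s₁ - ((-(k / (nx : ℝ)) + (j : ℝ) / (ny : ℝ)) * π - φy / (ny : ℝ)) = l * (2 * π)) ∧
          (∃ l : ℤ, s₂ - (((k : ℝ) / (nx : ℝ) + (j : ℝ) / (ny : ℝ)) * π - φy / (ny : ℝ)) = l * (2 * π))) ∨
       (∃ k j : ℤ, 1 ≤ k ∧ k ≤ (ny : ℤ) - 1 ∧
          (∃ l : ℤ, s₁ - ((-(k / (ny : ℝ)) + (j : ℝ) / (nx : ℝ)) * π - φx / (nx : ℝ)) = l * (2 * π)) ∧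
          (∃ l : ℤ, s₂ - (((k : ℝ) / (ny : ℝ) + (j : ℝ) / (nx : ℝ)) * π - φx / (nx : ℝ)) = l * (2 * π)))) := by
  have hπ : (0 : ℝ) < π := Real.pi_pos
  obtain ⟨h₁0, h₁2⟩ := h₁
  obtain ⟨h₂0, h₂2⟩ := h₂
  have hb : |t₂ - t₁| < 2 * π := abs_lt.mpr ⟨by linarith, by linarith⟩
  obtain ⟨m, hmx⟩ := Real.cos_eq_cos_iff.mp hcx
  obtain ⟨m', hmy⟩ := Real.cos_eq_cos_iff.mp hcy
  rcases hmx with hmx | hmx <;> rcases hmy with hmy | hmy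
  · -- both difference relations : contradiction via coprimality
    exfalso
    have e1 : (nx : ℝ) * (t₂ - t₁) = 2 * m * π := by linarith
    have e2 : (ny : ℝ) * (t₂ - t₁) = 2 * m' * π := by linarith
    have key : (ny : ℤ) * m = (nx : ℤ) * m' := by
      have h0 : ((ny : ℝ) * m - (nx : ℝ) * m') = 0 := by
        have hne0 : (2 * π : ℝ) ≠ 0 := by positivity
        have : ((ny : ℝ) * m - (nx : ℝ) * m') * (2 * π) = 0 := by nlinarith
        rcases mul_eq_zero.mp this with h | h
        · exact h
        · exact absurd h hne0
      have : ((ny : ℝ) * m : ℝ) = (nx : ℝ) * m' := by linarith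
      exact_mod_cast this
    have hcop' : IsCoprime (nx : ℤ) (ny : ℤ) :=
      Int.isCoprime_iff_gcd_eq_one.mpr (by exact_mod_cast hcop)
    have hdvd : (nx : ℤ) ∣ m := by
      have h1 : (nx : ℤ) ∣ (ny : ℤ) * m := ⟨m', key⟩
      exact hcop'.dvd_of_dvd_mul_left h1
    have hm0 : m ≠ 0 := by
      rintro rfl
      apply hne
      have : (nx : ℝ) * (t₂ - t₁) = 0 := by rw [e1]; ring
      rcases mul_eq_zero.mp this with h | h
      · exact absurd h (by positivity)
      · linarith [sub_eq_zero.mp h]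
    have hle : (nx : ℤ) ≤ |m| := Int.le_of_dvd (abs_pos.mpr hm0) ((dvd_abs _ _).mpr hdvd)
    have hmlt : |(m : ℝ)| < nx := by
      have h1 : |(nx : ℝ) * (t₂ - t₁)| = 2 * |(m : ℝ)| * π := by
        rw [e1, abs_mul, abs_mul, abs_two, abs_of_nonneg hπ.le]
      have h2 : |(nx : ℝ) * (t₂ - t₁)| < (nx : ℝ) * (2 * π) := by
        rw [abs_mul, abs_of_nonneg (by positivity : (0:ℝ) ≤ (nx:ℝ))]
        exact mul_lt_mul_of_pos_left hb (by positivity)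
      nlinarith
    have hle' : (nx : ℝ) ≤ |(m : ℝ)| := by
      have : ((nx : ℤ) : ℝ) ≤ ((|m| : ℤ) : ℝ) := by exact_mod_cast hle
      push_cast at this
      simpa using this
    linarith
  · -- x difference, y sum : Type I
    have e1 : (nx : ℝ) * (t₂ - t₁) = 2 * m * π := by linarith
    have e2 : (ny : ℝ) * (t₁ + t₂) + 2 * φy = 2 * m' * π := by linarith
    obtain ⟨s₁, s₂, hs, k, hk1, hk2, hl1, hl2⟩ :=
      lissajous_aux nx ny hnx hny φy t₁ t₂ hb hne m m' e1 e2
    exact ⟨s₁, s₂, hs, Or.inl ⟨k, m', hk1, hk2, hl1, hl2⟩⟩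
  · -- x sum, y difference : Type II
    have e1 : (ny : ℝ) * (t₂ - t₁) = 2 * m' * π := by linarith
    have e2 : (nx : ℝ) * (t₁ + t₂) + 2 * φx = 2 * m * π := by linarith
    obtain ⟨s₁, s₂, hs, k, hk1, hk2, hl1, hl2⟩ :=
      lissajous_aux ny nx hny hnx φx t₁ t₂ hb hne m' m e1 e2
    exact ⟨s₁, s₂, hs, Or.inr ⟨k, m, hk1, hk2, hl1, hl2⟩⟩
  · -- both sum relations : contradicts the phase condition
    exfalso
    apply hphase
    have e1 : (nx : ℝ) * (t₁ + t₂) + 2 * φx = 2 * m * π := by linarith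
    have e2 : (ny : ℝ) * (t₁ + t₂) + 2 * φy = 2 * m' * π := by linarith
    refine ⟨(ny : ℤ) * m - (nx : ℤ) * m', ?_⟩
    push_cast
    nlinarith
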